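/- Let G be a finitely generated group acting by automorphisms on a median graph 𝒢 and let x₀ be a vertex. Let C be the convex hull of the orbit G·x₀, i.e., the intersection of all convex sets of vertices containing G·x₀. Then C is G-invariant, and G acts with finitely many orbits on the hyperplanes crossing C: there is a finite set F of hyperplanes of 𝒢 such that every hyperplane of 𝒢 containing an edge with both endpoints in C equals g·H for some g ∈ G and H ∈ F. -/

import Mathlib

/-- `m` is a median of `x`, `y`, `z` in the graph `G`. -/
def IsMedianOf {V : Type*} (G : SimpleGraph V) (m x y z : V) : Prop :=
  G.dist x y = G.dist x m + G.dist m y ∧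
  G.dist y z = G.dist y m + G.dist m z ∧
  G.dist x z = G.dist x m + G.dist m z

/-- A median graph: connected, and every triple of vertices has a unique median. -/
def MedianGraph {V : Type*} (G : SimpleGraph V) : Prop :=
  G.Connected ∧ ∀ x y z : V, ∃! m : V, IsMedianOf G m x y z

/-- A set `S` of vertices is convex: every vertex on a geodesic (a walk realizing
the graph distance) between two vertices of `S` belongs to `S`. -/
def ConvexSet {V : Type*} (G : SimpleGraph V) (S : Set V) : Prop :=
  ∀ u ∈ S, ∀ v ∈ S, ∀ w : G.Walk u v, w.length = G.dist u v → ∀ x ∈ w.support, x ∈ S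

/-- Two edges are square-opposite: they are opposite sides of a 4-cycle. -/
def SquareOpposite {V : Type*} (G : SimpleGraph V) (e f : Sym2 V) : Prop :=
  ∃ a b c d : V, a ≠ b ∧ a ≠ c ∧ a ≠ d ∧ b ≠ c ∧ b ≠ d ∧ c ≠ d ∧
    G.Adj a b ∧ G.Adj c d ∧ G.Adj a c ∧ G.Adj b d ∧ e = s(a, b) ∧ f = s(c, d)

/-- A hyperplane: an equivalence class of edges under the equivalence relation
generated by square-opposition. -/
def IsHyperplane {V : Type*} (G : SimpleGraph V) (H : Set (Sym2 V)) : Prop :=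
  ∃ e ∈ G.edgeSet, H = {f | Relation.EqvGen (SquareOpposite G) e f}

/-- The image `g · H` of a set of edges `H` under the action of a group element `g`. -/
def hypImage {V Γ : Type*} [SMul Γ V] (g : Γ) (H : Set (Sym2 V)) : Set (Sym2 V) :=
  Sym2.map (fun v => g • v) '' H

/-!
In a median graph no vertex is equidistant from the ends of an edge `ab`, so `ab` splits the
vertices into the halfspaces `W(a,b)` (closer to `a`) and `W(b,a)`. Medians build the squares
showing that the hyperplane of `ab` consists exactly of the edges from `W(a,b)` to `W(b,a)`;
since a geodesic cannot cross a hyperplane twice, halfspaces are convex. So if an edge `uv` has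
both ends in the convex hull of the orbit `Γ • x₀`, the orbit meets both `W(u,v)` and `W(v,u)`.
Fix walks from `x₀` to `s • x₀` for `s` in a finite generating set: translates of these walks
join any two orbit points, so one translated edge crosses from `W(u,v)` to `W(v,u)`, and the
hyperplane of `uv` is a translate of the hyperplane of one of finitely many edges.
-/

open SimpleGraph

namespace SimpleGraph

variable {V W : Type*} {G : SimpleGraph V} {G' : SimpleGraph W} {a b u v w x y : V}

def halfspace (G : SimpleGraph V) (a b : V) : Set V := {z | G.dist z a + 1 = G.dist z b}

def crossingEdges (G : SimpleGraph V) (a b : V) : Set (Sym2 V) :=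
  {e | ∃ x ∈ G.halfspace a b, ∃ y ∈ G.halfspace b a, G.Adj x y ∧ e = s(x, y)}

def hyperplane (G : SimpleGraph V) (e : Sym2 V) : Set (Sym2 V) :=
  {f | Relation.EqvGen (SquareOpposite G) e f}

def convexHull (G : SimpleGraph V) (S : Set V) : Set V :=
  ⋂₀ {T | ConvexSet G T ∧ S ⊆ T}

lemma notMem_halfspace_swap (h : x ∈ G.halfspace a b) : x ∉ G.halfspace b a := by
  simp only [halfspace, Set.mem_ofPred_eq] at *
  omega

lemma Connected.dist_eq_of_adj_of_mem_halfspace (hc : G.Connected) (hxy : G.Adj x y)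
    (hx : x ∈ G.halfspace a b) (hy : y ∈ G.halfspace b a) : G.dist y b = G.dist x a := by
  have hya := hc.dist_triangle (u := y) (v := x) (w := a)
  have hxb := hc.dist_triangle (u := x) (v := y) (w := b)
  have hxy₁ := dist_eq_one_iff_adj.mpr hxy
  have hyx₁ := dist_eq_one_iff_adj.mpr hxy.symm
  simp only [halfspace, Set.mem_ofPred_eq] at hx hy
  omega

lemma Connected.exists_adj_dist_eq_of_dist_eq_add_one (hc : G.Connected) {k : ℕ}
    (h : G.dist x a = k + 1) : ∃ x', G.Adj x x' ∧ G.dist x' a = k := by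
  obtain ⟨p, hp⟩ := hc.exists_walk_length_eq_dist x a
  cases p with
  | nil => simp at h
  | @cons _ x' _ hxx' q =>
    have hq := dist_le q
    have htri := hc.dist_triangle (u := x) (v := x') (w := a)
    rw [dist_eq_one_iff_adj.mpr hxx'] at htri
    rw [Walk.length_cons] at hp
    exact ⟨x', hxx', by omega⟩

lemma Walk.dist_add_one_add_dist_of_mem_darts (hc : G.Connected) {p : G.Walk u w}
    (hp : p.length = G.dist u w) {d : G.Dart} (hd : d ∈ p.darts) :
    G.dist u d.fst + 1 + G.dist d.snd w = G.dist u w := by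
  obtain ⟨p₁, p₂, rfl⟩ := (Walk.isSubwalk_toWalk_adj_iff_mem_darts p).mpr hd
  have h₁ := dist_le p₁
  have h₂ := dist_le p₂
  have htri₁ := hc.dist_triangle (u := u) (v := d.fst) (w := w)
  have htri₂ := hc.dist_triangle (u := d.fst) (v := d.snd) (w := w)
  rw [dist_eq_one_iff_adj.mpr d.adj] at htri₂
  simp only [Walk.length_append, Adj.toWalk, Walk.length_cons, Walk.length_nil] at hp
  omega

lemma Walk.mem_halfspace_of_mem_darts_of_mem_darts (hc : G.Connected) {p : G.Walk u x}
    {q : G.Walk x w} (hpq : (p.append q).length = G.dist u w) {d₁ d₂ : G.Dart}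
    (hd₁ : d₁ ∈ p.darts) (hd₂ : d₂ ∈ q.darts) :
    d₂.fst ∈ G.halfspace d₁.snd d₁.fst ∧ d₂.snd ∈ G.halfspace d₁.snd d₁.fst := by
  -- Along a geodesic, the distance to `d₁.fst` exceeds the distance to `d₁.snd` from then on.
  have hp := length_eq_dist_of_subwalk hpq (Walk.isSubwalk_of_append_left rfl)
  have hq := length_eq_dist_of_subwalk hpq (Walk.isSubwalk_of_append_right rfl)
  rw [Walk.length_append, hp, hq] at hpq
  have e₁ := dist_add_one_add_dist_of_mem_darts hc hp hd₁
  have e₂ := dist_add_one_add_dist_of_mem_darts hc hq hd₂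
  have tri (a b c : V) : G.dist a c ≤ G.dist a b + G.dist b c := hc.dist_triangle
  have := tri u d₁.fst w
  have := tri d₁.fst d₂.snd w
  have := tri d₁.snd x d₂.fst
  have := tri d₁.fst d₂.fst d₂.snd
  have := tri d₁.fst d₁.snd d₂.fst
  have := tri d₁.fst d₁.snd d₂.snd
  have := tri d₁.snd d₂.fst d₂.snd
  have h₁ := dist_eq_one_iff_adj.mpr d₁.adj
  have h₂ := dist_eq_one_iff_adj.mpr d₂.adj
  simp only [halfspace, Set.mem_ofPred_eq, dist_comm (u := d₂.fst), dist_comm (u := d₂.snd)]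
  omega

lemma Iso.dist_eq (φ : G ≃g G') (u v : V) : G'.dist (φ u) (φ v) = G.dist u v := by
  by_cases hr : G.Reachable u v
  · apply le_antisymm
    · obtain ⟨p, hp⟩ := hr.exists_walk_length_eq_dist
      simpa [hp] using dist_le (p.map φ.toHom)
    · obtain ⟨p, hp⟩ := ((Iso.reachable_iff (φ := φ)).mpr hr).exists_walk_length_eq_dist
      simpa [hp] using dist_le (p.map φ.symm.toHom)
  · rw [dist_eq_zero_of_not_reachable hr,
      dist_eq_zero_of_not_reachable (mt Iso.reachable_iff.mp hr)]

end SimpleGraph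

lemma ConvexSet.preimage_iso {V W : Type*} {G : SimpleGraph V} {G' : SimpleGraph W} {S : Set W}
    (hS : ConvexSet G' S) (φ : G ≃g G') : ConvexSet G (φ ⁻¹' S) := by
  intro u hu v hv p hp x hx
  refine hS _ hu _ hv (p.map φ.toHom) (by rw [Walk.length_map, hp, φ.dist_eq]) _ ?_
  rw [Walk.support_map]
  exact List.mem_map_of_mem hx

namespace SquareOpposite

variable {V W : Type*} {G : SimpleGraph V} {G' : SimpleGraph W} {e f : Sym2 V}

lemma symm (h : SquareOpposite G e f) : SquareOpposite G f e := by
  obtain ⟨a, b, c, d, hab, hac, had, hbc, hbd, hcd, h₁, h₂, h₃, h₄, rfl, rfl⟩ := h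
  exact ⟨c, d, a, b, hcd, hac.symm, hbc.symm, had.symm, hbd.symm, hab, h₂, h₁, h₃.symm,
    h₄.symm, rfl, rfl⟩

lemma right_mem_edgeSet (h : SquareOpposite G e f) : f ∈ G.edgeSet := by
  obtain ⟨_, _, _, _, -, -, -, -, -, -, -, hcd, -, -, -, rfl⟩ := h
  exact hcd

lemma map (h : SquareOpposite G e f) (φ : G ↪g G') :
    SquareOpposite G' (e.map φ) (f.map φ) := by
  obtain ⟨a, b, c, d, hab, hac, had, hbc, hbd, hcd, h₁, h₂, h₃, h₄, rfl, rfl⟩ := h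
  exact ⟨φ a, φ b, φ c, φ d, φ.injective.ne hab, φ.injective.ne hac, φ.injective.ne had,
    φ.injective.ne hbc, φ.injective.ne hbd, φ.injective.ne hcd, φ.map_adj_iff.mpr h₁,
    φ.map_adj_iff.mpr h₂, φ.map_adj_iff.mpr h₃, φ.map_adj_iff.mpr h₄, rfl, rfl⟩

end SquareOpposite

namespace SimpleGraph

variable {V W : Type*} {G : SimpleGraph V} {G' : SimpleGraph W} {e f : Sym2 V}

lemma mem_of_mem_hyperplane {T : Set (Sym2 V)}
    (hT : ∀ e f, SquareOpposite G e f → e ∈ T → f ∈ T) (he : e ∈ T)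
    (hf : f ∈ G.hyperplane e) : f ∈ T := by
  have key : ∀ e f, Relation.EqvGen (SquareOpposite G) e f → (e ∈ T ↔ f ∈ T) := by
    intro e f h
    induction h with
    | rel e f h => exact ⟨hT e f h, hT f e h.symm⟩
    | refl => exact Iff.rfl
    | symm _ _ _ ih => exact ih.symm
    | trans _ _ _ _ _ ih₁ ih₂ => exact ih₁.trans ih₂
  exact (key e f hf).mp he

lemma hyperplane_eq_of_mem (h : f ∈ G.hyperplane e) : G.hyperplane f = G.hyperplane e := by
  have hequiv := Relation.EqvGen.is_equivalence (SquareOpposite G)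
  ext g
  exact ⟨hequiv.trans h, hequiv.trans (hequiv.symm h)⟩

lemma Embedding.map_mem_hyperplane (φ : G ↪g G') (h : f ∈ G.hyperplane e) :
    f.map φ ∈ G'.hyperplane (e.map φ) := by
  induction h with
  | rel _ _ h => exact .rel _ _ (h.map φ)
  | refl => exact .refl _
  | symm _ _ _ ih => exact .symm _ _ ih
  | trans _ _ _ _ _ ih₁ ih₂ => exact .trans _ _ _ ih₁ ih₂

lemma Iso.hyperplane_map (φ : G ≃g G') (e : Sym2 V) :
    G'.hyperplane (e.map φ) = Sym2.map φ '' G.hyperplane e := by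
  ext f
  constructor
  · intro hf
    refine ⟨f.map φ.symm, ?_, by simp [Sym2.map_map]⟩
    simpa [Sym2.map_map, Function.comp_def] using φ.symm.toEmbedding.map_mem_hyperplane hf
  · rintro ⟨f, hf, rfl⟩
    exact φ.toEmbedding.map_mem_hyperplane hf

end SimpleGraph

namespace MedianGraph

open SimpleGraph

variable {V : Type*} {G : SimpleGraph V} {a b x y z : V}

lemma dist_ne_of_adj (hG : MedianGraph G) (hxy : G.Adj x y) (z : V) :
    G.dist z x ≠ G.dist z y := by
  intro h
  obtain ⟨m, hm₁, hm₂, hm₃⟩ := (hG.2 x y z).exists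
  have hxy₁ := dist_eq_one_iff_adj.mpr hxy
  have hyx₁ := dist_eq_one_iff_adj.mpr hxy.symm
  have hzx : G.dist z x = G.dist x z := dist_comm
  have hzy : G.dist z y = G.dist y z := dist_comm
  have hm : G.dist x m = 0 ∨ G.dist m y = 0 := by omega
  rcases hm with hm | hm
  · obtain rfl := hG.1.dist_eq_zero_iff.mp hm
    omega
  · obtain rfl := hG.1.dist_eq_zero_iff.mp hm
    omega

lemma mem_halfspace_or_mem_halfspace (hG : MedianGraph G) (hab : G.Adj a b) (z : V) :
    z ∈ G.halfspace a b ∨ z ∈ G.halfspace b a := by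
  have := hG.1.dist_triangle (u := z) (v := a) (w := b)
  have := hG.1.dist_triangle (u := z) (v := b) (w := a)
  have := dist_eq_one_iff_adj.mpr hab
  have := dist_eq_one_iff_adj.mpr hab.symm
  have := hG.dist_ne_of_adj hab z
  simp only [halfspace, Set.mem_ofPred_eq]
  omega

lemma eq_of_adj_of_adj_of_mem_halfspace (hG : MedianGraph G) (hab : G.Adj a b)
    (hx : x ∈ G.halfspace a b) (hy : y ∈ G.halfspace a b) (hz : z ∈ G.halfspace b a)
    (hxz : G.Adj x z) (hyz : G.Adj y z) : x = y := by
  by_contra hne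
  have hc := hG.1
  have hxa := hc.dist_eq_of_adj_of_mem_halfspace hxz hx hz
  have hya := hc.dist_eq_of_adj_of_mem_halfspace hyz hy hz
  have hxz₁ := dist_eq_one_iff_adj.mpr hxz
  have hzy₁ := dist_eq_one_iff_adj.mpr hyz.symm
  have hyz₁ := dist_eq_one_iff_adj.mpr hyz
  have hxy : G.dist x y = 2 := by
    have := hc.dist_triangle (u := x) (v := z) (w := y)
    have h₀ : G.dist x y ≠ 0 := fun h => hne (hc.dist_eq_zero_iff.mp h)
    have h₁ : G.dist x y ≠ 1 := fun h => hG.dist_ne_of_adj (dist_eq_one_iff_adj.mp h) z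
      (by rw [dist_comm, hxz₁, dist_comm, hyz₁])
    omega
  -- The median `m` of `x, y, a` is, like `z`, a median of `x, y, b`, but it is closer to `a`.
  obtain ⟨m, hm₁, hm₂, hm₃⟩ := (hG.2 x y a).exists
  have hym : G.dist y m = G.dist m y := dist_comm
  have := hc.dist_triangle (u := x) (v := m) (w := b)
  have := hc.dist_triangle (u := m) (v := a) (w := b)
  have := dist_eq_one_iff_adj.mpr hab
  simp only [halfspace, Set.mem_ofPred_eq] at hx hy hz
  have hmb : IsMedianOf G m x y b := ⟨by omega, by omega, by omega⟩
  have hzb : IsMedianOf G z x y b := ⟨by omega, by omega, by omega⟩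
  obtain rfl := (hG.2 x y b).unique hmb hzb
  omega

lemma mem_crossingEdges_of_square (hG : MedianGraph G) (hab : G.Adj a b) {x' y' : V}
    (hxy : G.Adj x y) (hx'y' : G.Adj x' y') (hxx' : G.Adj x x') (hyy' : G.Adj y y')
    (hxy' : x ≠ y') (hyx' : y ≠ x') (hx : x ∈ G.halfspace a b) (hy : y ∈ G.halfspace b a) :
    s(x', y') ∈ G.crossingEdges a b := by
  rcases hG.mem_halfspace_or_mem_halfspace hab x' with hx' | hx' <;>
    rcases hG.mem_halfspace_or_mem_halfspace hab y' with hy' | hy'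
  · exact absurd (hG.eq_of_adj_of_adj_of_mem_halfspace hab hx hy' hy hxy hyy'.symm) hxy'
  · exact ⟨x', hx', y', hy', hx'y', rfl⟩
  · exact ⟨y', hy', x', hx', hx'y'.symm, Sym2.eq_swap⟩
  · exact absurd
      (hG.eq_of_adj_of_adj_of_mem_halfspace hab.symm hy hx' hx hxy.symm hxx'.symm) hyx'

lemma mem_crossingEdges_of_squareOpposite (hG : MedianGraph G) (hab : G.Adj a b)
    {e f : Sym2 V} (hef : SquareOpposite G e f) (he : e ∈ G.crossingEdges a b) :
    f ∈ G.crossingEdges a b := by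
  obtain ⟨x, y, x', y', -, -, hxy', hyx', -, -, hxy, hx'y', hxx', hyy', rfl, rfl⟩ := hef
  obtain ⟨p, hp, q, hq, -, hpq⟩ := he
  rcases Sym2.eq_iff.mp hpq with ⟨rfl, rfl⟩ | ⟨rfl, rfl⟩
  · exact hG.mem_crossingEdges_of_square hab hxy hx'y' hxx' hyy' hxy' hyx' hp hq
  · rw [Sym2.eq_swap]
    exact hG.mem_crossingEdges_of_square hab hxy.symm hx'y'.symm hyy' hxx' hyx' hxy' hp hq

lemma mem_hyperplane_of_mem_halfspace (hG : MedianGraph G) (hab : G.Adj a b)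
    (hxy : G.Adj x y) (hx : x ∈ G.halfspace a b) (hy : y ∈ G.halfspace b a) :
    s(x, y) ∈ G.hyperplane s(a, b) := by
  have hc := hG.1
  obtain ⟨k, hk⟩ : ∃ k, G.dist x a = k := ⟨_, rfl⟩
  induction k generalizing x y with
  | zero =>
    obtain rfl := hc.dist_eq_zero_iff.mp hk
    obtain rfl :=
      hc.dist_eq_zero_iff.mp ((hc.dist_eq_of_adj_of_mem_halfspace hxy hx hy).trans hk)
    exact .refl _
  | succ k ih =>
    -- A neighbour `x'` of `x` closer to `a` and the median `t` of `x', y, b` span a square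
    -- `x' t y x` whose edge `x' t` crosses the wall one step closer to `a`.
    obtain ⟨x', hxx', hx'a⟩ := hc.exists_adj_dist_eq_of_dist_eq_add_one hk
    obtain ⟨t, ht₁, ht₂, ht₃⟩ := (hG.2 x' y b).exists
    have hyb := hc.dist_eq_of_adj_of_mem_halfspace hxy hx hy
    have tri (a b c : V) : G.dist a c ≤ G.dist a b + G.dist b c := hc.dist_triangle
    have := tri x x' b
    have := tri x' a b
    have := tri x' x y
    have := tri y x' a
    have := tri y t a
    have := tri t b a
    have := dist_eq_one_iff_adj.mpr hab
    have := dist_eq_one_iff_adj.mpr hab.symm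
    have := dist_eq_one_iff_adj.mpr hxx'
    have := dist_eq_one_iff_adj.mpr hxx'.symm
    have := dist_eq_one_iff_adj.mpr hxy
    have hyx' : G.dist y x' = G.dist x' y := dist_comm
    have hyt : G.dist y t = G.dist t y := dist_comm
    simp only [halfspace, Set.mem_ofPred_eq] at hx hy
    have hx'y : G.dist x' y = 2 := by omega
    have hx't : G.Adj x' t := dist_eq_one_iff_adj.mp (by omega)
    have hty : G.Adj t y := dist_eq_one_iff_adj.mp (by omega)
    have hx' : x' ∈ G.halfspace a b := by simp only [halfspace, Set.mem_ofPred_eq]; omega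
    have ht : t ∈ G.halfspace b a := by simp only [halfspace, Set.mem_ofPred_eq]; omega
    have htb : G.dist t b = k := by omega
    have hsq : SquareOpposite G s(x', t) s(x, y) :=
      ⟨x', t, x, y, hx't.ne, hxx'.ne.symm, by rintro rfl; simp at hx'y, by rintro rfl; omega,
        hty.ne, hxy.ne, hx't, hxy, hxx'.symm, hty, rfl, rfl⟩
    exact .trans _ _ _ (ih hx't hx' ht hx'a) (.rel _ _ hsq)

theorem hyperplane_eq_crossingEdges (hG : MedianGraph G) (hab : G.Adj a b) :
    G.hyperplane s(a, b) = G.crossingEdges a b := by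
  refine Set.Subset.antisymm (fun f hf => mem_of_mem_hyperplane
    (fun _ _ h => hG.mem_crossingEdges_of_squareOpposite hab h) ?_ hf) ?_
  · exact ⟨a, by simpa [halfspace] using (dist_eq_one_iff_adj.mpr hab).symm,
      b, by simpa [halfspace] using (dist_eq_one_iff_adj.mpr hab.symm).symm, hab, rfl⟩
  · rintro _ ⟨x, hx, y, hy, hxy, rfl⟩
    exact hG.mem_hyperplane_of_mem_halfspace hab hxy hx hy

theorem convexSet_halfspace (hG : MedianGraph G) (hab : G.Adj a b) :
    ConvexSet G (G.halfspace a b) := by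
  classical
  intro u hu w hw p hp x hxp
  by_contra hx
  rw [← p.take_spec hxp] at hp
  obtain ⟨d₁, hd₁, hd₁u, hd₁x⟩ := (p.takeUntil x hxp).exists_boundary_dart _ hu hx
  obtain ⟨d₂, hd₂, hd₂x, hd₂w⟩ :=
    (p.dropUntil x hxp).exists_boundary_dart (G.halfspace a b)ᶜ hx (not_not.mpr hw)
  have h₁ : s(d₁.fst, d₁.snd) ∈ G.crossingEdges a b :=
    ⟨_, hd₁u, _, (hG.mem_halfspace_or_mem_halfspace hab _).resolve_left hd₁x, d₁.adj, rfl⟩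
  have h₂ : s(d₂.snd, d₂.fst) ∈ G.crossingEdges a b := ⟨_, not_not.mp hd₂w, _,
    (hG.mem_halfspace_or_mem_halfspace hab _).resolve_left hd₂x, d₂.adj.symm, rfl⟩
  -- Lying in the hyperplane of `d₁`, the dart `d₂` would cross the wall of `d₁` a second time.
  rw [← hG.hyperplane_eq_crossingEdges hab] at h₁ h₂
  rw [← hyperplane_eq_of_mem h₁, hG.hyperplane_eq_crossingEdges d₁.adj] at h₂
  obtain ⟨y, hy, y', -, -, hyy'⟩ := h₂
  obtain ⟨hfst, hsnd⟩ := Walk.mem_halfspace_of_mem_darts_of_mem_darts hG.1 hp hd₁ hd₂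
  rcases Sym2.eq_iff.mp hyy' with ⟨rfl, rfl⟩ | ⟨rfl, rfl⟩
  · exact notMem_halfspace_swap hsnd hy
  · exact notMem_halfspace_swap hfst hy

lemma exists_mem_halfspace_of_mem_convexHull (hG : MedianGraph G) {u v : V}
    (huv : G.Adj u v) {S : Set V} (hu : u ∈ G.convexHull S) :
    ∃ x ∈ S, x ∈ G.halfspace u v := by
  by_contra! h
  have hsub : G.convexHull S ⊆ G.halfspace v u := Set.sInter_subset_of_mem
    ⟨hG.convexSet_halfspace huv.symm,
      fun x hx => (hG.mem_halfspace_or_mem_halfspace huv x).resolve_left (h x hx)⟩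
  simpa [halfspace] using hsub hu

end MedianGraph

section Action

open SimpleGraph MulAction

variable {V Γ : Type*} [Group Γ] [MulAction Γ V] {G : SimpleGraph V}

def SimpleGraph.smulIso (hact : ∀ (g : Γ) (u v : V), G.Adj u v ↔ G.Adj (g • u) (g • v))
    (g : Γ) : G ≃g G where
  toEquiv := MulAction.toPerm g
  map_rel_iff' := (hact g _ _).symm

lemma SimpleGraph.hyperplane_smul
    (hact : ∀ (g : Γ) (u v : V), G.Adj u v ↔ G.Adj (g • u) (g • v)) (g : Γ) (e : Sym2 V) :
    G.hyperplane (e.map (g • ·)) = hypImage g (G.hyperplane e) :=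
  (smulIso hact g).hyperplane_map e

lemma SimpleGraph.smul_mem_convexHull_orbit
    (hact : ∀ (g : Γ) (u v : V), G.Adj u v ↔ G.Adj (g • u) (g • v)) (g : Γ) {x v : V}
    (hv : v ∈ G.convexHull (orbit Γ x)) : g • v ∈ G.convexHull (orbit Γ x) := by
  refine Set.mem_sInter.mpr fun S ⟨hS, horb⟩ => ?_
  refine Set.mem_sInter.mp hv (smulIso hact g ⁻¹' S) ⟨hS.preimage_iso _, ?_⟩
  rintro _ ⟨h, rfl⟩
  show g • h • x ∈ S
  rw [smul_smul]
  exact horb (mem_orbit x (g * h))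

lemma SimpleGraph.reachable_smul_of_mem_closure
    (hact : ∀ (g : Γ) (u v : V), G.Adj u v → G.Adj (g • u) (g • v)) {S : Set Γ} {x : V}
    (hS : ∀ s ∈ S, G.Reachable x (s • x)) {g : Γ} (hg : g ∈ Subgroup.closure S) :
    G.Reachable x (g • x) := by
  let φ (g : Γ) : G →g G := ⟨(g • ·), hact g _ _⟩
  induction hg using Subgroup.closure_induction with
  | mem s hs => exact hS s hs
  | one => rw [one_smul]
  | mul a b _ _ ha hb =>
    rw [mul_smul]
    exact ha.trans (hb.map (φ a))
  | inv a _ ha => simpa [φ] using (ha.map (φ a⁻¹)).symm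

theorem MedianGraph.exists_hyperplane_eq_hypImage (hG : MedianGraph G)
    (hact : ∀ (g : Γ) (u v : V), G.Adj u v ↔ G.Adj (g • u) (g • v)) {S : Set Γ}
    (hS : Subgroup.closure S = ⊤) {x₀ : V} {E : Set (Sym2 V)} (hE : E ⊆ G.edgeSet)
    (hwalk : ∀ s ∈ S, ∃ p : G.Walk x₀ (s • x₀), ∀ e ∈ p.edges, e ∈ E) {u v : V}
    (huv : G.Adj u v) (hu : u ∈ G.convexHull (orbit Γ x₀))
    (hv : v ∈ G.convexHull (orbit Γ x₀)) :
    ∃ g : Γ, ∃ e ∈ E, G.hyperplane s(u, v) = hypImage g (G.hyperplane e) := by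
  set T := fromEdgeSet {f | ∃ g : Γ, ∃ e ∈ E, e.map (g • ·) = f}
  have hT (g : Γ) (p q : V) (hpq : T.Adj p q) : T.Adj (g • p) (g • q) := by
    obtain ⟨⟨h, e, he, hepq⟩, hne⟩ := hpq
    refine ⟨⟨g * h, e, he, ?_⟩, (MulAction.injective g).ne hne⟩
    rw [← Sym2.map_mk, ← hepq, Sym2.map_map]
    simp [mul_smul]
  have hreach (g : Γ) : T.Reachable x₀ (g • x₀) := by
    refine reachable_smul_of_mem_closure hT (fun s hs => ?_) (hS ▸ Subgroup.mem_top g)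
    obtain ⟨p, hp⟩ := hwalk s hs
    refine ⟨p.transfer T fun e he => ?_⟩
    rw [edgeSet_fromEdgeSet]
    exact ⟨⟨1, e, hp e he, by simp⟩, G.not_isDiag_of_mem_edgeSet (hE (hp e he))⟩
  obtain ⟨_, ⟨g₁, rfl⟩, hg₁⟩ := hG.exists_mem_halfspace_of_mem_convexHull huv hu
  obtain ⟨_, ⟨g₂, rfl⟩, hg₂⟩ := hG.exists_mem_halfspace_of_mem_convexHull huv.symm hv
  obtain ⟨p⟩ := (hreach g₁).symm.trans (hreach g₂)
  obtain ⟨d, -, hd₁, hd₂⟩ := p.exists_boundary_dart _ hg₁ (notMem_halfspace_swap hg₂)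
  obtain ⟨⟨g, e, he, hge⟩, -⟩ := d.adj
  have hd : G.Adj d.fst d.snd := by
    rw [← mem_edgeSet, ← hge]
    exact (smulIso hact g).map_mem_edgeSet_iff.mpr (hE he)
  have hcross : s(d.fst, d.snd) ∈ G.hyperplane s(u, v) := hG.mem_hyperplane_of_mem_halfspace
    huv hd hd₁ ((hG.mem_halfspace_or_mem_halfspace huv _).resolve_left hd₂)
  exact ⟨g, e, he, by rw [← hyperplane_eq_of_mem hcross, ← hge, hyperplane_smul hact]⟩

end Action

/-- For a finitely generated group acting on a median graph, the convex hull of an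
orbit is invariant and carries finitely many orbits of hyperplanes. -/
theorem convex_hull_orbit_invariant_finitely_many_hyperplane_orbits {V : Type*}
    (𝒢 : SimpleGraph V) (hG : MedianGraph 𝒢)
    {Γ : Type*} [Group Γ] [Group.FG Γ] [MulAction Γ V]
    (hact : ∀ (g : Γ) (u v : V), 𝒢.Adj u v ↔ 𝒢.Adj (g • u) (g • v))
    (x₀ : V) (C : Set V)
    (hC : C = ⋂₀ {S : Set V | ConvexSet 𝒢 S ∧ MulAction.orbit Γ x₀ ⊆ S}) :
    (∀ g : Γ, ∀ v ∈ C, g • v ∈ C) ∧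
      ∃ F : Finset (Set (Sym2 V)), (∀ H ∈ F, IsHyperplane 𝒢 H) ∧
        ∀ H : Set (Sym2 V), IsHyperplane 𝒢 H → (∃ e ∈ H, ∀ v : V, v ∈ e → v ∈ C) →
          ∃ g : Γ, ∃ H₀ ∈ F, H = hypImage g H₀ := by
  subst hC
  refine ⟨fun g v hv => smul_mem_convexHull_orbit hact g hv, ?_⟩
  obtain ⟨S, hS, hSfin⟩ := Group.fg_iff.mp ‹Group.FG Γ›
  let p (s : Γ) : 𝒢.Walk x₀ (s • x₀) := (hG.1.preconnected x₀ (s • x₀)).some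
  let E : Set (Sym2 V) := ⋃ s ∈ S, {e | e ∈ (p s).edges}
  have hE : E ⊆ 𝒢.edgeSet := Set.iUnion₂_subset fun s _ => (p s).edges_subset_edgeSet
  have hEfin : E.Finite := hSfin.biUnion fun s _ => (p s).edges.finite_toSet
  refine ⟨(hEfin.image 𝒢.hyperplane).toFinset, ?_, ?_⟩
  · simp only [Set.Finite.mem_toFinset]
    rintro _ ⟨e, he, rfl⟩
    exact ⟨e, hE he, rfl⟩
  · rintro H ⟨e₀, he₀, rfl⟩ ⟨e, heH, heC⟩
    induction e using Sym2.ind with | h u v => ?_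
    have huv : 𝒢.Adj u v :=
      mem_of_mem_hyperplane (fun _ _ h _ => h.right_mem_edgeSet) he₀ heH
    obtain ⟨g, e, he, hH⟩ := hG.exists_hyperplane_eq_hypImage hact hS hE
      (fun s hs => ⟨p s, fun e he => Set.mem_biUnion hs he⟩) huv
      (heC u (Sym2.mem_mk_left u v)) (heC v (Sym2.mem_mk_right u v))
    refine ⟨g, 𝒢.hyperplane e, by simpa using Set.mem_image_of_mem _ he, ?_⟩
    rw [← hH]
    exact (hyperplane_eq_of_mem heH).symm
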